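/- Let ℓ > 0 be a real number. For λ > 0 define m(λ) := min over α ∈ [0,1] of α^{ℓ/2}(α − λ) (with the value 0 at α = 0; the minimum exists by continuity on [0,1]). Define D(λ) := (λ − 1) + m(λ) − λ m(1/λ). Then D(λ) > 0 for λ > 1, D(1) = 0, and D(λ) < 0 for 0 < λ < 1. -/

import Mathlib

/-- The optimized one-step greedy cost for the last pair in the queue:
`m(λ) = min_{α ∈ [0,1]} α^{ℓ/2} (α - λ)` (with value `0` at `α = 0`; the minimum
exists and equals the infimum since the function is continuous on `[0,1]`). -/
noncomputable def mfun (ℓ lam : ℝ) : ℝ :=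
  sInf ((fun α : ℝ => α ^ (ℓ / 2) * (α - lam)) '' Set.Icc (0 : ℝ) 1)

/-- The normalized cost gap `D(λ) = (λ - 1) + m(λ) - λ m(1/λ)` between the two
orderings of the last sensor pair in the queue. -/
noncomputable def DfunLast (ℓ lam : ℝ) : ℝ :=
  (lam - 1) + mfun ℓ lam - lam * mfun ℓ (1 / lam)

/-! With `p = ℓ / 2` and `c = p ^ p / (p + 1) ^ (p + 1)`, weighted AM-GM gives
`α ^ p (μ - α) ≤ c μ ^ (p + 1)` with equality at `α = p μ / (p + 1)`, so `m(μ) = -c μ ^ (p + 1)` for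
`μ ≤ 1`. Hence for `λ > 1`, `D(λ) = (λ - 1) + α ^ p (α - λ) + c λ ^ (-p)` at a minimizer `α` of
`m(λ)`; this is positive by that AM-GM bound together with the Bernoulli inequalities
`(p + 1) α ^ p ≤ 1 + p α ^ (p + 1)` and `λ ^ (-p) > 1 - p (λ - 1)`. The case `λ < 1` follows from
`D(λ) = -λ D(1 / λ)`. -/

open Real Set

/-- The maximum of `β ^ p * (1 - β)` over `β ≥ 0`, attained at `β = p / (p + 1)`. -/
noncomputable def rpowMulOneSubMax (p : ℝ) : ℝ := p ^ p / (p + 1) ^ (p + 1)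

section Inequalities

variable {p : ℝ}

lemma rpowMulOneSubMax_pos (hp : 0 < p) : 0 < rpowMulOneSubMax p := by
  unfold rpowMulOneSubMax; positivity

/-- Weighted AM-GM with weights `p / (p + 1)`, `1 / (p + 1)` at `(p + 1) / p * u` and `(p + 1) * v`,
raised to the power `p + 1`. -/
lemma rpow_mul_le_rpowMulOneSubMax_mul {u v : ℝ} (hp : 0 < p) (hu : 0 ≤ u) (hv : 0 ≤ v) :
    u ^ p * v ≤ rpowMulOneSubMax p * (u + v) ^ (p + 1) := by
  have hp1 : 0 < p + 1 := by linarith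
  set x := (p + 1) / p * u
  set y := (p + 1) * v
  have hx : 0 ≤ x := by positivity
  have hy : 0 ≤ y := by positivity
  have amgm : x ^ (p / (p + 1)) * y ^ (1 / (p + 1)) ≤ u + v := by
    have h := geom_mean_le_arith_mean2_weighted (w₁ := p / (p + 1)) (w₂ := 1 / (p + 1))
      (by positivity) (by positivity) hx hy (by field_simp)
    have hsum : p / (p + 1) * x + 1 / (p + 1) * y = u + v := by
      simp only [x, y]; field_simp
    rwa [hsum] at h
  have hpow : (x ^ (p / (p + 1)) * y ^ (1 / (p + 1))) ^ (p + 1) = x ^ p * y := by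
    rw [mul_rpow (by positivity) (by positivity), ← rpow_mul hx, ← rpow_mul hy,
      div_mul_cancel₀ _ hp1.ne', one_div_mul_cancel hp1.ne', rpow_one]
  calc u ^ p * v = rpowMulOneSubMax p * (x ^ p * y) := by
        simp only [rpowMulOneSubMax, x, y]
        rw [mul_rpow (by positivity) hu, div_rpow hp1.le hp.le, rpow_add_one hp1.ne']
        field_simp
    _ ≤ rpowMulOneSubMax p * (u + v) ^ (p + 1) := by
        rw [← hpow]
        have := rpowMulOneSubMax_pos hp
        gcongr

lemma rpow_mul_sub_le {α μ : ℝ} (hp : 0 < p) (hα : 0 ≤ α) (hμ : 0 ≤ μ) :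
    α ^ p * (μ - α) ≤ rpowMulOneSubMax p * μ ^ (p + 1) := by
  rcases le_total α μ with h | h
  · simpa using rpow_mul_le_rpowMulOneSubMax_mul hp hα (sub_nonneg.2 h)
  · exact (mul_nonpos_of_nonneg_of_nonpos (rpow_nonneg hα p) (sub_nonpos.2 h)).trans
      (mul_nonneg (rpowMulOneSubMax_pos hp).le (rpow_nonneg hμ _))

lemma rpow_mul_sub_eq_at_max {μ : ℝ} (hp : 0 < p) (hμ : 0 ≤ μ) :
    (p / (p + 1) * μ) ^ p * (p / (p + 1) * μ - μ) = -(rpowMulOneSubMax p * μ ^ (p + 1)) := by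
  have hp1 : 0 < p + 1 := by linarith
  rw [rpowMulOneSubMax, mul_rpow (by positivity) hμ, div_rpow hp.le hp1.le,
    rpow_add_one' hμ hp1.ne', rpow_add_one hp1.ne']
  field_simp
  ring

lemma add_one_mul_rpow_le (hp : 0 ≤ p) {α : ℝ} (hα : 0 ≤ α) :
    (p + 1) * α ^ p ≤ 1 + p * α ^ (p + 1) := by
  have hp1 : 0 < p + 1 := by linarith
  have h := rpow_one_add_le_one_add_mul_self (s := α ^ (p + 1) - 1)
    (by linarith [rpow_nonneg hα (p + 1)]) (p := p / (p + 1)) (by positivity)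
    (div_le_one_of_le₀ (by linarith) hp1.le)
  rw [add_sub_cancel, ← rpow_mul hα, mul_div_cancel₀ _ hp1.ne'] at h
  have hscale : (1 + p / (p + 1) * (α ^ (p + 1) - 1)) * (p + 1) = 1 + p * α ^ (p + 1) := by
    field_simp
    ring
  linarith [mul_le_mul_of_nonneg_right h hp1.le]

lemma one_sub_mul_lt_rpow_neg (hp : 0 < p) {x : ℝ} (hx : 0 < x) (hx1 : x ≠ 1) :
    1 - p * (x - 1) < x ^ (-p) := by
  have h₁ := log_le_sub_one_of_pos (rpow_pos_of_pos hx (-p))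
  have h₂ := log_lt_sub_one_of_pos hx hx1
  rw [log_rpow hx] at h₁
  nlinarith

/-- With `c = rpowMulOneSubMax p`, `a = 1 - α ^ p` and `t = lam - 1`, the expression equals
`(c - α ^ p (1 - α)) + t (a - p c) + c (lam ^ (-p) - 1 + p t)`, which settles the case `p c ≤ a`;
otherwise `p α ^ (p + 1) ≥ (p + 1) α ^ p - 1` bounds `p` times it below by
`a (p t - 1) + p c lam ^ (-p)`, and `a ≤ p c` handles `p t < 1`. -/
lemma rpow_mul_sub_add_rpowMulOneSubMax_mul_rpow_neg_pos {lam α : ℝ} (hp : 0 < p)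
    (hlam : 1 < lam) (hα₀ : 0 ≤ α) (hα₁ : α ≤ 1) :
    0 < α ^ p * (α - lam) + (lam - 1) + rpowMulOneSubMax p * lam ^ (-p) := by
  set c := rpowMulOneSubMax p
  have hc : 0 < c := rpowMulOneSubMax_pos hp
  have hL : 0 < lam ^ (-p) := rpow_pos_of_pos (by linarith) _
  have hαp : α ^ p ≤ 1 := rpow_le_one hα₀ hα₁ hp.le
  have hpeak : α ^ p * (1 - α) ≤ c := by simpa using rpow_mul_sub_le hp hα₀ zero_le_one
  have hbern : (p + 1) * α ^ p ≤ 1 + p * (α ^ p * α) := by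
    simpa [rpow_add_one' hα₀ (by linarith : p + 1 ≠ 0)] using add_one_mul_rpow_le hp.le hα₀
  have htangent := one_sub_mul_lt_rpow_neg hp (by linarith) hlam.ne'
  rcases le_total (p * c) (1 - α ^ p) with hbig | hsmall
  · nlinarith [mul_le_mul_of_nonneg_left hbig (by linarith : (0 : ℝ) ≤ lam - 1)]
  · suffices 0 < p * (α ^ p * (α - lam) + (lam - 1) + c * lam ^ (-p)) from
      pos_of_mul_pos_right this hp.le
    rcases le_total (p * (lam - 1)) 1 with hnear | hfar
    · nlinarith [mul_le_mul_of_nonpos_right hsmall (by linarith : p * (lam - 1) - 1 ≤ 0),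
        mul_pos (mul_pos hp hc) (sub_pos.2 htangent)]
    · nlinarith [mul_nonneg (by linarith : 0 ≤ 1 - α ^ p) (by linarith : 0 ≤ p * (lam - 1) - 1),
        mul_pos (mul_pos hp hc) hL]

end Inequalities

lemma mfun_eq_of_le_one {ℓ μ : ℝ} (hℓ : 0 < ℓ) (hμ₀ : 0 ≤ μ) (hμ₁ : μ ≤ 1) :
    mfun ℓ μ = -(rpowMulOneSubMax (ℓ / 2) * μ ^ (ℓ / 2 + 1)) := by
  have hp : 0 < ℓ / 2 := by positivity
  refine IsLeast.csInf_eq ⟨⟨ℓ / 2 / (ℓ / 2 + 1) * μ, ⟨by positivity, ?_⟩,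
    rpow_mul_sub_eq_at_max hp hμ₀⟩, ?_⟩
  · exact mul_le_one₀ (div_le_one_of_le₀ (by linarith) (by positivity)) hμ₀ hμ₁
  · rintro _ ⟨α, ⟨hα₀, -⟩, rfl⟩
    linarith [rpow_mul_sub_le hp hα₀ hμ₀]

lemma exists_mfun_eq {ℓ : ℝ} (hℓ : 0 < ℓ) (lam : ℝ) :
    ∃ α ∈ Icc (0 : ℝ) 1, α ^ (ℓ / 2) * (α - lam) = mfun ℓ lam :=
  (isCompact_Icc.image (by fun_prop (disch := positivity))).sInf_mem
    ((nonempty_Icc.2 zero_le_one).image _)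

lemma DfunLast_eq_neg_mul_DfunLast_one_div (ℓ : ℝ) {lam : ℝ} (hlam : lam ≠ 0) :
    DfunLast ℓ lam = -lam * DfunLast ℓ (1 / lam) := by
  simp only [DfunLast, one_div_one_div]
  field_simp
  ring

lemma DfunLast_pos {ℓ lam : ℝ} (hℓ : 0 < ℓ) (hlam : 1 < lam) : 0 < DfunLast ℓ lam := by
  have hlam₀ : 0 < lam := by linarith
  obtain ⟨α, ⟨hα₀, hα₁⟩, hα⟩ := exists_mfun_eq hℓ lam
  have hscale : lam * (1 / lam) ^ (ℓ / 2 + 1) = lam ^ (-(ℓ / 2)) := by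
    rw [one_div, inv_rpow hlam₀.le, rpow_add_one hlam₀.ne', rpow_neg hlam₀.le]
    field_simp
  have hinv := mfun_eq_of_le_one hℓ (one_div_pos.2 hlam₀).le (div_le_one_of_le₀ hlam.le hlam₀.le)
  have key := rpow_mul_sub_add_rpowMulOneSubMax_mul_rpow_neg_pos (p := ℓ / 2) (by positivity)
    hlam hα₀ hα₁
  rw [DfunLast, ← hα, hinv]
  linear_combination key - rpowMulOneSubMax (ℓ / 2) * hscale

/-- **Theorem 4, Case II (last-pair swap)**: for `ℓ > 0`, the normalized optimized
cost gap satisfies `D(λ) > 0` for `λ > 1`, `D(1) = 0`, and `D(λ) < 0` for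
`0 < λ < 1`. -/
theorem greedy_last_swap_gap_sign (ℓ : ℝ) (hℓ : 0 < ℓ) :
    (∀ lam : ℝ, 1 < lam → 0 < DfunLast ℓ lam) ∧
    DfunLast ℓ 1 = 0 ∧
    (∀ lam : ℝ, 0 < lam → lam < 1 → DfunLast ℓ lam < 0) := by
  refine ⟨fun lam hlam => DfunLast_pos hℓ hlam, by simp [DfunLast], fun lam hlam₀ hlam₁ => ?_⟩
  rw [DfunLast_eq_neg_mul_DfunLast_one_div ℓ hlam₀.ne', neg_mul]
  exact neg_neg_of_pos (mul_pos hlam₀ (DfunLast_pos hℓ (one_lt_one_div hlam₀ hlam₁)))
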